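/- arXiv:1203.3174 — 9 statements merged into one kernel-verified Lean document; each statement's English description precedes it below -/
import Mathlib

section
/- If dim V = m, then (φ₁,…,φ_q; f₁,…,f_k) is stable if and only if the functionals fⱼ ∘ φ_w, where w ranges over words of length at most m−1 in {1,…,q} and j over {1,…,k}, span the dual space V*. -/
def phiWord {k V : Type*} [Field k] [AddCommGroup V] [Module k V]
    {q : ℕ} (φ : Fin q → Module.End k V) : List (Fin q) → Module.End k V :=
  fun w => (w.map φ).prod

def IsStableTuple {k V : Type*} [Field k] [AddCommGroup V] [Module k V]
    {q r : ℕ} (φ : Fin q → Module.End k V) (f : Fin r → (V →ₗ[k] k)) : Prop :=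
  ∀ U : Submodule k V,
    (∀ i, U.map (φ i) ≤ U) → (∀ j, U ≤ LinearMap.ker (f j)) → U = ⊥

section Aux

variable {k V : Type*} [Field k] [AddCommGroup V] [Module k V]
  {q r : ℕ} (φ : Fin q → Module.End k V) (f : Fin r → (V →ₗ[k] k))

/-- Span of functionals coming from words of length at most `n`. -/
noncomputable def Wn (n : ℕ) : Submodule k (V →ₗ[k] k) :=
  Submodule.span k {g : V →ₗ[k] k | ∃ j : Fin r, ∃ w : List (Fin q),
    w.length ≤ n ∧ g = (f j) ∘ₗ (phiWord φ w : V →ₗ[k] V)}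

lemma phiWord_concat (w : List (Fin q)) (i : Fin q) :
    phiWord φ (w ++ [i]) = phiWord φ w * φ i := by
  simp [phiWord]

lemma phiWord_cons (w : List (Fin q)) (i : Fin q) :
    phiWord φ (i :: w) = φ i * phiWord φ w := by
  simp [phiWord]

lemma comp_phiWord_concat (j : Fin r) (w : List (Fin q)) (i : Fin q) :
    (f j) ∘ₗ (phiWord φ (w ++ [i]) : V →ₗ[k] V) =
      (φ i : V →ₗ[k] V).dualMap ((f j) ∘ₗ (phiWord φ w : V →ₗ[k] V)) := by
  rw [phiWord_concat]
  ext v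
  simp [Module.End.mul_apply]

lemma Wn_mono {a b : ℕ} (h : a ≤ b) : Wn φ f a ≤ Wn φ f b := by
  apply Submodule.span_mono
  rintro g ⟨j, w, hw, rfl⟩
  exact ⟨j, w, hw.trans h, rfl⟩

lemma Wn_succ (n : ℕ) :
    Wn φ f (n + 1) =
      Wn φ f n ⊔ ⨆ i : Fin q, (Wn φ f n).map ((φ i : V →ₗ[k] V).dualMap) := by
  apply le_antisymm
  · apply Submodule.span_le.2
    rintro g ⟨j, w, hw, rfl⟩
    rcases List.eq_nil_or_concat' w with rfl | ⟨w', i, rfl⟩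
    · exact le_sup_left (a := Wn φ f n) (Submodule.subset_span ⟨j, [], by simp, rfl⟩)
    · have hl : w'.length ≤ n := by
        simp only [List.length_append, List.length_singleton] at hw; omega
      have hmem : (f j) ∘ₗ (phiWord φ w' : V →ₗ[k] V) ∈ Wn φ f n :=
        Submodule.subset_span ⟨j, w', hl, rfl⟩
      refine le_sup_right (a := Wn φ f n) ?_
      refine Submodule.mem_iSup_of_mem i ?_
      rw [comp_phiWord_concat]
      exact Submodule.mem_map_of_mem hmem
  · refine sup_le (Wn_mono φ f (Nat.le_succ n)) (iSup_le fun i => ?_)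
    rw [Wn, Submodule.map_span, Submodule.span_le]
    rintro g ⟨g', ⟨j, w, hw, rfl⟩, rfl⟩
    exact Submodule.subset_span ⟨j, w ++ [i], by simpa using Nat.succ_le_succ hw,
      (comp_phiWord_concat φ f j w i).symm⟩

lemma Wn_stab {n : ℕ} (h : Wn φ f n = Wn φ f (n + 1)) :
    ∀ N, n ≤ N → Wn φ f N = Wn φ f n := by
  intro N hN
  induction N with
  | zero =>
    have : n = 0 := by omega
    subst this; rfl
  | succ N ih =>
    rcases Nat.lt_or_ge n (N + 1) with hlt | hge
    · have hN' : n ≤ N := by omega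
      have hI := ih hN'
      rw [Wn_succ, hI, ← Wn_succ, ← h]
    · have : n = N + 1 := by omega
      subst this; rfl

end Aux

theorem stable_iff_span_short_words
    {k V : Type*} [Field k] [AddCommGroup V] [Module k V] [FiniteDimensional k V]
    {m q r : ℕ} (hm : Module.finrank k V = m)
    (φ : Fin q → Module.End k V) (f : Fin r → (V →ₗ[k] k)) :
    IsStableTuple φ f ↔
      Submodule.span k
        {g : V →ₗ[k] k | ∃ j : Fin r, ∃ w : List (Fin q),
          w.length ≤ m - 1 ∧ g = (f j) ∘ₗ (phiWord φ w : V →ₗ[k] V)} = ⊤ := by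
  have hdual : Module.finrank k (V →ₗ[k] k) = m := by
    rw [← hm]; exact Subspace.dual_finrank_eq
  constructor
  · -- stable → span = ⊤
    intro hstable
    -- find stabilization index n ≤ m - 1
    have hex : ∃ n ≤ m - 1, Wn φ f n = Wn φ f (n + 1) := by
      by_contra hc
      push_neg at hc
      -- all steps strict
      have hstrict : ∀ n ≤ m - 1, Wn φ f n < Wn φ f (n + 1) := fun n hn =>
        lt_of_le_of_ne (Wn_mono φ f (Nat.le_succ n)) (hc n hn)
      rcases eq_or_ne (Wn φ f 0) ⊥ with h0 | h0
      · -- W 0 = ⊥ forces W 1 = ⊥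
        have : Wn φ f 1 = ⊥ := by
          rw [Wn_succ, h0]
          simp
        exact absurd (h0.trans this.symm) (hc 0 (Nat.zero_le _))
      · have hrank : ∀ j ≤ m - 1 + 1, j + 1 ≤ Module.finrank k (Wn φ f j) := by
          intro j hj
          induction j with
          | zero =>
            have hne : Module.finrank k (Wn φ f 0) ≠ 0 :=
              fun h => h0 (Submodule.finrank_eq_zero.mp h)
            omega
          | succ j ih =>
            have h1 : Module.finrank k (Wn φ f j) < Module.finrank k (Wn φ f (j + 1)) :=
              Submodule.finrank_lt_finrank_of_lt (hstrict j (by omega))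
            have := ih (by omega)
            omega
        have h2 := hrank (m - 1 + 1) le_rfl
        have h3 : Module.finrank k (Wn φ f (m - 1 + 1)) ≤ m := by
          rw [← hdual]; exact Submodule.finrank_le _
        omega
    obtain ⟨n, hn, hW⟩ := hex
    have hstab := Wn_stab φ f hW
    -- W (m-1) is closed under precomposition with each φ i
    have hclosed : ∀ i : Fin q,
        (Wn φ f (m - 1)).map ((φ i : V →ₗ[k] V).dualMap) ≤ Wn φ f (m - 1) := by
      intro i
      have h1 : (Wn φ f (m - 1)).map ((φ i : V →ₗ[k] V).dualMap) ≤ Wn φ f (m - 1 + 1) := by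
        rw [Wn_succ]
        exact le_sup_right.trans' (le_iSup_of_le i le_rfl)
      rw [hstab (m - 1 + 1) (by omega), ← hstab (m - 1) hn] at h1
      exact h1
    set U := (Wn φ f (m - 1)).dualCoannihilator with hU
    have hUinv : ∀ i, U.map (φ i) ≤ U := by
      rintro i g ⟨v, hv, rfl⟩
      have hv' : ∀ g ∈ Wn φ f (m - 1), g v = 0 :=
        fun g hg => (Submodule.mem_dualCoannihilator v).mp hv g hg
      rw [Submodule.mem_dualCoannihilator]
      intro g hg
      have : (φ i : V →ₗ[k] V).dualMap g ∈ Wn φ f (m - 1) :=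
        hclosed i (Submodule.mem_map_of_mem hg)
      simpa using hv' _ this
    have hUker : ∀ j, U ≤ LinearMap.ker (f j) := by
      intro j v hv
      have hv' : ∀ g ∈ Wn φ f (m - 1), g v = 0 :=
        fun g hg => (Submodule.mem_dualCoannihilator v).mp hv g hg
      have hfj : f j ∈ Wn φ f (m - 1) :=
        Submodule.subset_span ⟨j, [], by simp, by ext v; simp [phiWord]⟩
      simpa using hv' _ hfj
    have hUbot : U = ⊥ := hstable U hUinv hUker
    have : (Wn φ f (m - 1)) = ⊤ := by
      have := Subspace.dualCoannihilator_dualAnnihilator_eq (W := Wn φ f (m - 1))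
      rw [show (Wn φ f (m - 1)).dualCoannihilator = ⊥ from hUbot] at this
      rw [← this, Submodule.dualAnnihilator_bot]
    exact this
  · -- span = ⊤ → stable
    intro hspan U hUinv hUker
    have hword : ∀ (w : List (Fin q)) (v : V), v ∈ U → (phiWord φ w : V →ₗ[k] V) v ∈ U := by
      intro w
      induction w with
      | nil => intro v hv; simpa [phiWord] using hv
      | cons i w ih =>
        intro v hv
        rw [phiWord_cons]
        exact hUinv i ⟨_, ih v hv, rfl⟩
    ext v
    simp only [Submodule.mem_bot]
    constructor
    · intro hv
      rw [← Module.forall_dual_apply_eq_zero_iff k v]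
      intro g
      have hg : g ∈ Submodule.span k
          {g : V →ₗ[k] k | ∃ j : Fin r, ∃ w : List (Fin q),
            w.length ≤ m - 1 ∧ g = (f j) ∘ₗ (phiWord φ w : V →ₗ[k] V)} := by
        rw [hspan]; trivial
      induction hg using Submodule.span_induction with
      | mem g hgmem =>
        obtain ⟨j, w, _, rfl⟩ := hgmem
        have := hUker j (hword w v hv)
        simpa using this
      | zero => simp
      | add a b _ _ ha hb => simp [ha, hb]
      | smul c a _ ha => simp [ha]
    · rintro rfl; exact U.zero_mem
end

section
/- Two stable pairs (a, f) and (a', f') on k^m (with f, f∘a, …, f∘a^{m−1} linearly independent and likewise for (a',f')) are conjugate under the GL_m(k)-action g·(a,f) = (g a g⁻¹, f g⁻¹) if and only if a and a' have the same characteristic polynomial. -/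
/-!
The rows `f ∘ aⁱ` (`i < m`) of the Krylov matrix `krylov a f` of a stable pair form a basis of the
dual space, so `krylov a f` is invertible, and conjugating the pair by `g` multiplies its Krylov
matrix on the right by `g⁻¹`. Hence `g = (krylov a' f')⁻¹ * krylov a f` moves `(a, f)` to a pair
`(b, h)` with the same Krylov matrix as `(a', f')`. By Cayley–Hamilton every `h ∘ bⁿ` is determined
by the `h ∘ bⁱ` with `i < m` and by the characteristic polynomial, so if `a` and `a'` have the same
characteristic polynomial then `krylov b h * b = krylov a' f' * a'`, which forces
`(b, h) = (a', f')`.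
-/

open Matrix Polynomial

theorem Matrix.apply_aeval_mulVec_eq_of_charpoly_eq {R n M : Type*} [CommRing R] [Nontrivial R]
    [Fintype n] [DecidableEq n] [AddCommGroup M] [Module R M] {a a' : Matrix n n R}
    {f f' : (n → R) →ₗ[R] M} (hχ : a.charpoly = a'.charpoly)
    (hpow : ∀ i < Fintype.card n, ∀ v, f (a ^ i *ᵥ v) = f' (a' ^ i *ᵥ v)) (p : R[X])
    (v : n → R) : f (aeval a p *ᵥ v) = f' (aeval a' p *ᵥ v) := by
  rw [aeval_eq_aeval_mod_charpoly a, aeval_eq_aeval_mod_charpoly a', ← hχ]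
  have hdeg : (p %ₘ a.charpoly).degree < Fintype.card n := by
    simpa [charpoly_degree_eq_dim] using degree_modByMonic_lt p a.charpoly_monic
  simp only [aeval_eq_sum_range, sum_mulVec, smul_mulVec, map_sum, map_smul]
  refine Finset.sum_congr rfl fun i _ => ?_
  by_cases hi : i < Fintype.card n
  · rw [hpow i hi]
  · rw [coeff_eq_zero_of_degree_lt (hdeg.trans_le (by exact_mod_cast not_lt.1 hi)),
      zero_smul, zero_smul]

namespace Matrix

variable {k : Type*} [Field k] {m : ℕ}

def krylov (a : Matrix (Fin m) (Fin m) k) (f : (Fin m → k) →ₗ[k] k) :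
    Matrix (Fin m) (Fin m) k :=
  LinearMap.toMatrix' (LinearMap.pi fun i : Fin m => f ∘ₗ (a ^ (i : ℕ)).mulVecLin)

@[simp]
theorem krylov_mulVec_apply (a : Matrix (Fin m) (Fin m) k) (f : (Fin m → k) →ₗ[k] k)
    (v : Fin m → k) (i : Fin m) : (krylov a f *ᵥ v) i = f (a ^ (i : ℕ) *ᵥ v) := by
  simp [krylov]

theorem isUnit_krylov {a : Matrix (Fin m) (Fin m) k} {f : (Fin m → k) →ₗ[k] k}
    (hstab : LinearIndependent k fun i : Fin m => f ∘ₗ (a ^ (i : ℕ)).mulVecLin) :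
    IsUnit (krylov a f) := by
  rw [← mulVec_injective_iff_isUnit]
  intro v w hvw
  rw [← sub_eq_zero, ← Module.forall_dual_apply_eq_zero_iff k]
  have hspan := hstab.span_eq_top_of_card_eq_finrank' (by simp [Subspace.dual_finrank_eq])
  have hle : Submodule.span k (Set.range fun i : Fin m => f ∘ₗ (a ^ (i : ℕ)).mulVecLin) ≤
      LinearMap.ker (Module.Dual.eval k _ (v - w)) :=
    Submodule.span_le.2 <| Set.range_subset_iff.2 fun i => by
      simpa [sub_eq_zero, mulVec_sub] using congrFun hvw i
  rw [hspan] at hle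
  exact fun φ => hle Submodule.mem_top

theorem krylov_units_conj (g : (Matrix (Fin m) (Fin m) k)ˣ) (a : Matrix (Fin m) (Fin m) k)
    (f : (Fin m → k) →ₗ[k] k) :
    krylov ((g : Matrix (Fin m) (Fin m) k) * a * (↑g⁻¹ : Matrix (Fin m) (Fin m) k))
        (f ∘ₗ (↑g⁻¹ : Matrix (Fin m) (Fin m) k).mulVecLin) =
      krylov a f * (↑g⁻¹ : Matrix (Fin m) (Fin m) k) :=
  ext_iff_mulVec.2 fun v => funext fun i => by
    rw [← mulVec_mulVec, krylov_mulVec_apply, krylov_mulVec_apply, Units.conj_pow]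
    simp [mulVec_mulVec, ← mul_assoc]

theorem eq_of_krylov_eq {a a' : Matrix (Fin m) (Fin m) k} {f f' : (Fin m → k) →ₗ[k] k}
    (hχ : a.charpoly = a'.charpoly) (hK : krylov a f = krylov a' f')
    (hunit : IsUnit (krylov a' f')) : a = a' ∧ f = f' := by
  have hpow : ∀ i < Fintype.card (Fin m), ∀ v, f (a ^ i *ᵥ v) = f' (a' ^ i *ᵥ v) :=
    fun i hi v => by simpa using congrFun (congrArg (· *ᵥ v) hK) ⟨i, by simpa using hi⟩
  have hpoly := apply_aeval_mulVec_eq_of_charpoly_eq hχ hpow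
  refine ⟨?_, LinearMap.ext fun v => by simpa using hpoly 1 v⟩
  have hshift : krylov a f * a = krylov a' f' * a' :=
    ext_iff_mulVec.2 fun v => funext fun i => by
      simpa [← mulVec_mulVec, pow_succ] using hpoly (X ^ ((i : ℕ) + 1)) v
  rw [hK] at hshift
  exact hunit.mul_left_cancel hshift

end Matrix

theorem stable_pairs_conjugate_iff_charpoly_eq
    {k : Type*} [Field k] {m : ℕ}
    (a a' : Matrix (Fin m) (Fin m) k) (f f' : (Fin m → k) →ₗ[k] k)
    (hstab : LinearIndependent k
      (fun i : Fin m => f ∘ₗ Matrix.mulVecLin (a ^ (i : ℕ))))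
    (hstab' : LinearIndependent k
      (fun i : Fin m => f' ∘ₗ Matrix.mulVecLin (a' ^ (i : ℕ)))) :
    (∃ g : GL (Fin m) k,
        a' = (g : Matrix (Fin m) (Fin m) k) * a *
          ((g⁻¹ : GL (Fin m) k) : Matrix (Fin m) (Fin m) k) ∧
        f' = f ∘ₗ Matrix.mulVecLin ((g⁻¹ : GL (Fin m) k) : Matrix (Fin m) (Fin m) k))
      ↔ Matrix.charpoly a = Matrix.charpoly a' := by
  constructor
  · rintro ⟨g, rfl, -⟩
    rw [coe_units_inv, charpoly_units_conj]
  · intro hχ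
    obtain ⟨K, hK⟩ := isUnit_krylov hstab
    obtain ⟨K', hK'⟩ := isUnit_krylov hstab'
    set g := K'⁻¹ * K
    have hconj : krylov ((g : Matrix (Fin m) (Fin m) k) * a * (↑g⁻¹ : Matrix (Fin m) (Fin m) k))
        (f ∘ₗ (↑g⁻¹ : Matrix (Fin m) (Fin m) k).mulVecLin) = krylov a' f' := by
      rw [krylov_units_conj, ← hK, ← hK', ← Units.val_mul]
      simp [g]
    obtain ⟨ha, hf⟩ := eq_of_krylov_eq (by rw [coe_units_inv, charpoly_units_conj, hχ]) hconj
      (isUnit_krylov hstab')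
    exact ⟨g, ha.symm, hf.symm⟩
end

section
/- Let a ∈ End(V), dim V = m, and f ∈ V* be a stable pair (f, f∘a, …, f∘a^{m−1} linearly independent). Then the row of coordinates of f∘a^m in the basis f, f∘a, …, f∘a^{m−1} of V* is exactly (c₀, c₁, …, c_{m−1}), where x^m − c_{m−1}x^{m−1} − ⋯ − c₀ is the characteristic polynomial of a. -/
theorem coords_of_f_comp_pow_m
    {k V : Type*} [Field k] [AddCommGroup V] [Module k V] [FiniteDimensional k V]
    {m : ℕ} (hm : Module.finrank k V = m)
    (a : Module.End k V) (f : V →ₗ[k] k)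
    (hstab : LinearIndependent k (fun i : Fin m => f ∘ₗ ((a ^ (i : ℕ)) : V →ₗ[k] V))) :
    f ∘ₗ ((a ^ m : Module.End k V) : V →ₗ[k] V) =
      ∑ i : Fin m,
        (-((LinearMap.charpoly a).coeff (i : ℕ))) •
          (f ∘ₗ ((a ^ (i : ℕ) : Module.End k V) : V →ₗ[k] V)) := by
  have hdeg : (LinearMap.charpoly a).natDegree = m := by
    rw [LinearMap.charpoly_natDegree, hm]
  have hch : Polynomial.aeval a (LinearMap.charpoly a) = 0 :=
    LinearMap.aeval_self_charpoly a
  rw [Polynomial.aeval_eq_sum_range, hdeg, Finset.sum_range_succ] at hch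
  have hmon : (LinearMap.charpoly a).coeff m = 1 := by
    have := (LinearMap.charpoly_monic a).coeff_natDegree
    rwa [hdeg] at this
  rw [hmon, one_smul] at hch
  have ham : (a ^ m : Module.End k V) =
      ∑ i ∈ Finset.range m, (-(LinearMap.charpoly a).coeff i) • a ^ i := by
    rw [eq_neg_of_add_eq_zero_right hch]
    rw [← Finset.sum_neg_distrib]
    exact Finset.sum_congr rfl fun i _ => (neg_smul _ _).symm
  ext x
  simp only [LinearMap.coe_comp, Function.comp_apply, LinearMap.sum_apply,
    LinearMap.smul_apply]
  rw [show ((a ^ m : Module.End k V) : V →ₗ[k] V) x = (a ^ m) x from rfl, ham]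
  simp only [LinearMap.sum_apply, LinearMap.smul_apply, LinearMap.neg_apply, map_sum,
    map_neg, map_smul, smul_eq_mul, neg_smul, neg_mul]
  exact (Fin.sum_univ_eq_sum_range (fun i => -((LinearMap.charpoly a).coeff i * f ((a ^ i) x))) m).symm
end

section
/- Let a ∈ End(k²) and f₁, f₂ ∈ (k²)*. The triple (a; f₁, f₂) is stable (no nonzero a-invariant subspace lies in ker f₁ ∩ ker f₂) if and only if at least one of the following three pairs is linearly independent in (k²)*: (f₁, f₁∘a), (f₂, f₂∘a), (f₁, f₂). -/
private lemma aux_indep_zero {k : Type*} [Field k] (g h : (Fin 2 → k) →ₗ[k] k)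
    (hi : LinearIndependent k ![g, h]) {x : Fin 2 → k}
    (hg : g x = 0) (hh : h x = 0) : x = 0 := by
  have hsp : Submodule.span k (Set.range ![g, h]) = ⊤ := by
    apply hi.span_eq_top_of_card_eq_finrank
    simp [Module.finrank_linearMap]
  have hker : (⊤ : Submodule k ((Fin 2 → k) →ₗ[k] k)) ≤
      LinearMap.ker (Module.Dual.eval k (Fin 2 → k) x) := by
    rw [← hsp]
    apply Submodule.span_le.2
    rintro φ ⟨i, rfl⟩
    fin_cases i <;> simp [LinearMap.mem_ker, hg, hh]
  have hall : ∀ φ : (Fin 2 → k) →ₗ[k] k, φ x = 0 := fun φ => hker Submodule.mem_top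
  funext i
  simpa using hall (LinearMap.proj i)

private lemma aux_dep {k : Type*} [Field k] (g h : (Fin 2 → k) →ₗ[k] k)
    (hg : g ≠ 0) (hd : ¬ LinearIndependent k ![g, h]) : ∃ c : k, h = c • g := by
  rw [LinearIndependent.pair_iff] at hd
  push_neg at hd
  obtain ⟨s, t, hst, hne⟩ := hd
  by_cases ht : t = 0
  · subst ht
    simp only [zero_smul, add_zero] at hst
    have hs : s ≠ 0 := fun h => hne h rfl
    rcases smul_eq_zero.1 hst with h | h
    · exact absurd h hs
    · exact absurd h hg
  · refine ⟨-(t⁻¹ * s), ?_⟩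
    have ht2 : t • h = -(s • g) := eq_neg_of_add_eq_zero_right hst
    have ht1 : h = t⁻¹ • (t • h) := by rw [smul_smul, inv_mul_cancel₀ ht, one_smul]
    rw [ht1, ht2, smul_neg, smul_smul, ← neg_smul]

theorem stable_one_op_two_functionals_iff
    {k : Type*} [Field k]
    (a : Module.End k (Fin 2 → k)) (f₁ f₂ : (Fin 2 → k) →ₗ[k] k) :
    (∀ U : Submodule k (Fin 2 → k),
        U.map a ≤ U → U ≤ LinearMap.ker f₁ → U ≤ LinearMap.ker f₂ → U = ⊥) ↔
      (LinearIndependent k ![f₁, f₁ ∘ₗ (a : (Fin 2 → k) →ₗ[k] (Fin 2 → k))] ∨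
       LinearIndependent k ![f₂, f₂ ∘ₗ (a : (Fin 2 → k) →ₗ[k] (Fin 2 → k))] ∨
       LinearIndependent k ![f₁, f₂]) := by
  constructor
  · intro hstab
    by_contra hcon
    push_neg at hcon
    obtain ⟨h1, h2, h3⟩ := hcon
    by_cases hf1 : f₁ = 0
    · by_cases hf2 : f₂ = 0
      · -- both zero, take ⊤
        have := hstab ⊤ le_top (by simp [hf1]) (by simp [hf2])
        have hx : (fun _ => (1 : k)) ∈ (⊥ : Submodule k (Fin 2 → k)) := this ▸ Submodule.mem_top
        simp only [Submodule.mem_bot] at hx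
        exact one_ne_zero (congrFun hx 0)
      · -- f₂ ≠ 0
        obtain ⟨μ, hμ⟩ := aux_dep f₂ (f₂ ∘ₗ (a : (Fin 2 → k) →ₗ[k] (Fin 2 → k))) hf2 h2
        have hU := hstab (LinearMap.ker f₂)
          (by
            rintro x ⟨y, hy, rfl⟩
            have : f₂ (a y) = μ * f₂ y := by
              have := congrFun (congrArg DFunLike.coe hμ) y
              simpa using this
            simp only [LinearMap.mem_ker] at hy ⊢
            rw [this, hy, mul_zero])
          (by simp [hf1]) le_rfl
        have hinj : Function.Injective f₂ := by
          rw [← LinearMap.ker_eq_bot]; exact hU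
        have := LinearMap.finrank_le_finrank_of_injective hinj
        simp at this
    · -- f₁ ≠ 0
      obtain ⟨μ, hμ⟩ := aux_dep f₁ (f₁ ∘ₗ (a : (Fin 2 → k) →ₗ[k] (Fin 2 → k))) hf1 h1
      obtain ⟨c, hc⟩ := aux_dep f₁ f₂ hf1 h3
      have hU := hstab (LinearMap.ker f₁)
        (by
          rintro x ⟨y, hy, rfl⟩
          have : f₁ (a y) = μ * f₁ y := by
            have := congrFun (congrArg DFunLike.coe hμ) y
            simpa using this
          simp only [LinearMap.mem_ker] at hy ⊢
          rw [this, hy, mul_zero])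
        le_rfl
        (by
          intro x hx
          simp only [LinearMap.mem_ker] at hx ⊢
          rw [hc]
          simp [hx])
      have hinj : Function.Injective f₁ := by
        rw [← LinearMap.ker_eq_bot]; exact hU
      have := LinearMap.finrank_le_finrank_of_injective hinj
      simp at this
  · intro hdisj U hinv hk1 hk2
    rw [Submodule.eq_bot_iff]
    intro x hx
    have hax : a x ∈ U := hinv ⟨x, hx, rfl⟩
    rcases hdisj with h | h | h
    · exact aux_indep_zero _ _ h (hk1 hx) (by simpa using hk1 hax)
    · exact aux_indep_zero _ _ h (hk2 hx) (by simpa using hk2 hax)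
    · exact aux_indep_zero _ _ h (hk1 hx) (hk2 hx)
end

section
/- Let a, b ∈ End(k²) and f ∈ (k²)*. The triple (a, b; f) is stable (no nonzero subspace invariant under both a and b lies in ker f) if and only if (f, f∘a) is linearly independent or (f, f∘b) is linearly independent. -/
/-!
If `f` and `f ∘ g` are linearly independent, they form a basis of the dual of the plane, so a
`g`-invariant subspace inside `ker f` is killed by `f ∘ g` as well, hence by every functional,
and is zero. Conversely, if `f ∘ a` and `f ∘ b` are both multiples of `f`, then the line (or the
plane, if `f = 0`) `ker f` is a nonzero subspace invariant under `a` and `b`.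
-/

open Module Submodule

section

variable {k V : Type*} [Field k] [AddCommGroup V] [Module k V]

theorem Module.Dual.eq_zero_of_linearIndependent_of_apply_eq_zero [FiniteDimensional k V]
    {ι : Type*} [Fintype ι] {φ : ι → Dual k V} (hφ : LinearIndependent k φ)
    (hcard : Fintype.card ι = finrank k V) {v : V} (hv : ∀ i, φ i v = 0) : v = 0 := by
  have hspan : span k (Set.range φ) = ⊤ :=
    hφ.span_eq_top_of_card_eq_finrank' (hcard.trans Subspace.dual_finrank_eq.symm)
  have hmem : v ∈ (span k (Set.range φ)).dualCoannihilator := by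
    rw [← SetLike.mem_coe, coe_dualCoannihilator_span]
    rintro _ ⟨i, rfl⟩
    exact hv i
  rwa [hspan, dualCoannihilator_top, mem_bot] at hmem

theorem Submodule.eq_bot_of_map_le_of_le_ker_of_linearIndependent
    (hV : finrank k V = 2) {f : Dual k V} {g : End k V}
    (hfg : LinearIndependent k ![f, f ∘ₗ g]) {U : Submodule k V} (hU : U.map g ≤ U)
    (hUf : U ≤ LinearMap.ker f) : U = ⊥ := by
  have : FiniteDimensional k V := Module.finite_of_finrank_eq_succ hV
  refine (Submodule.eq_bot_iff U).mpr fun u hu ↦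
    Dual.eq_zero_of_linearIndependent_of_apply_eq_zero hfg (by simp [hV]) fun i ↦ ?_
  fin_cases i
  · exact hUf hu
  · exact hUf (hU (mem_map_of_mem hu))

theorem LinearMap.map_ker_le_ker_of_not_linearIndependent {f : Dual k V} {g : End k V}
    (hfg : ¬ LinearIndependent k ![f, f ∘ₗ g]) : (LinearMap.ker f).map g ≤ LinearMap.ker f := by
  rw [LinearIndependent.pair_iff] at hfg
  push Not at hfg
  obtain ⟨s, t, hst, hne⟩ := hfg
  rintro _ ⟨x, hx, rfl⟩
  have hstx : s * f x + t * f (g x) = 0 := by simpa using congr($hst x)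
  rw [SetLike.mem_coe, LinearMap.mem_ker] at hx
  rw [LinearMap.mem_ker]
  by_cases ht : t = 0
  · have hf : f = 0 := (smul_eq_zero.mp (by simpa [ht] using hst)).resolve_left (hne · ht)
    simp [hf]
  · simpa [hx, ht] using hstx

end

theorem stable_two_ops_one_functional_iff
    {k : Type*} [Field k]
    (a b : Module.End k (Fin 2 → k)) (f : (Fin 2 → k) →ₗ[k] k) :
    (∀ U : Submodule k (Fin 2 → k),
        U.map a ≤ U → U.map b ≤ U → U ≤ LinearMap.ker f → U = ⊥) ↔
      (LinearIndependent k ![f, f ∘ₗ (a : (Fin 2 → k) →ₗ[k] (Fin 2 → k))] ∨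
       LinearIndependent k ![f, f ∘ₗ (b : (Fin 2 → k) →ₗ[k] (Fin 2 → k))]) := by
  have hdim : finrank k (Fin 2 → k) = 2 := by simp
  constructor
  · intro hstable
    by_contra! ⟨ha, hb⟩
    exact f.ker_ne_bot_of_finrank_lt (by simp [hdim]) <| hstable _
      (LinearMap.map_ker_le_ker_of_not_linearIndependent ha)
      (LinearMap.map_ker_le_ker_of_not_linearIndependent hb) le_rfl
  · rintro (h | h) U hUa hUb hUf
    · exact eq_bot_of_map_le_of_le_ker_of_linearIndependent hdim h hUa hUf
    · exact eq_bot_of_map_le_of_le_ker_of_linearIndependent hdim h hUb hUf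
end

section
/- If (φ₁,…,φ_q; f₁,…,f_k) is stable on k^m and g ∈ GL_m(k) satisfies gφᵢg⁻¹ = φᵢ for all i and fⱼg⁻¹ = fⱼ for all j, then g is the identity; i.e., GL_m(k) acts freely on stable tuples. -/
theorem free_action_on_stable_tuples
    {k : Type*} [Field k] {m q r : ℕ}
    (φ : Fin q → Module.End k (Fin m → k)) (f : Fin r → ((Fin m → k) →ₗ[k] k))
    (hstab : IsStableTuple φ f)
    (g : (Fin m → k) ≃ₗ[k] (Fin m → k))
    (hφ : ∀ i, (g.toLinearMap ∘ₗ (φ i : (Fin m → k) →ₗ[k] (Fin m → k)) ∘ₗ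
      g.symm.toLinearMap) = (φ i : (Fin m → k) →ₗ[k] (Fin m → k)))
    (hf : ∀ j, f j ∘ₗ g.symm.toLinearMap = f j) :
    g = LinearEquiv.refl k (Fin m → k) := by
  -- Derived commutation facts
  have hgφ : ∀ i (v : Fin m → k), g (φ i v) = φ i (g v) := by
    intro i v
    have := congrArg (fun L => L (g v)) (hφ i)
    simpa using this
  have hfg : ∀ j (v : Fin m → k), f j (g v) = f j v := by
    intro j v
    have := congrArg (fun L => L (g v)) (hf j)
    simpa using this.symm
  -- The range of g - 1 is a stable-killing submodule
  set h : (Fin m → k) →ₗ[k] (Fin m → k) := g.toLinearMap - LinearMap.id with hh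
  have hrange : LinearMap.range h = ⊥ := by
    apply hstab
    · intro i x hx
      rcases hx with ⟨y, hy, rfl⟩
      rcases hy with ⟨v, rfl⟩
      refine ⟨φ i v, ?_⟩
      simp [hh, hgφ i v, map_sub]
    · intro j x hx
      rcases hx with ⟨v, rfl⟩
      simp [hh, LinearMap.mem_ker, hfg j v]
  have : ∀ v, g v = v := by
    intro v
    have : h v = 0 := by
      have : h = 0 := LinearMap.range_eq_bot.mp hrange
      simp [this]
    have := sub_eq_zero.mp (by simpa [hh] using this)
    simpa using this
  ext v
  simp [this v]
end

section
/- Let (φ₁,…,φ_q; f₁,…,f_k) be stable on k^m and suppose S is a set of m pairs (j, w) (w words in {1,…,q}) such that {fⱼ∘φ_w : (j,w) ∈ S} is a basis of (k^m)*. Then the orbit of (φ, f) under GL_m(k) contains a unique tuple (φ', f') such that the matrix whose rows are f'ⱼ∘φ'_w, (j,w) ∈ S (in a fixed order), is the identity matrix. -/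
lemma phiWord_conj {k V : Type*} [Field k] [AddCommGroup V] [Module k V]
    {q : ℕ} (φ : Fin q → Module.End k V) (g : V ≃ₗ[k] V) (w : List (Fin q)) :
    (phiWord (fun i => (g.toLinearMap ∘ₗ (φ i : V →ₗ[k] V) ∘ₗ g.symm.toLinearMap :
      Module.End k V)) w : V →ₗ[k] V)
      = g.toLinearMap ∘ₗ (phiWord φ w : V →ₗ[k] V) ∘ₗ g.symm.toLinearMap := by
  induction w with
  | nil =>
      simp [phiWord]
      ext x
      simp
  | cons a w ih =>
      simp only [phiWord, List.map_cons, List.prod_cons] at *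
      ext x
      simp only [Module.End.mul_apply, LinearMap.coe_comp, Function.comp_apply,
        LinearEquiv.coe_coe] at *
      rw [ih]
      simp

/-- Uniqueness of the normal form associated to a J-skeleton `S`
(with a fixed ordering `e` of its elements). -/
theorem unique_normal_form_of_skeleton
    {k : Type*} [Field k] {m q r : ℕ}
    (φ : Fin q → Module.End k (Fin m → k)) (f : Fin r → ((Fin m → k) →ₗ[k] k))
    (hstab : IsStableTuple φ f)
    (S : Finset (Fin r × List (Fin q))) (hcard : S.card = m)
    (e : Fin m ≃ S)
    (hli : LinearIndependent k
      (fun p : S => (f p.1.1) ∘ₗ (phiWord φ p.1.2 : (Fin m → k) →ₗ[k] (Fin m → k))))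
    (hsp : Submodule.span k
      (Set.range fun p : S =>
        (f p.1.1) ∘ₗ (phiWord φ p.1.2 : (Fin m → k) →ₗ[k] (Fin m → k))) = ⊤) :
    ∃! p : (Fin q → Module.End k (Fin m → k)) × (Fin r → ((Fin m → k) →ₗ[k] k)),
      (∃ g : (Fin m → k) ≃ₗ[k] (Fin m → k),
        (∀ i, (p.1 i : (Fin m → k) →ₗ[k] (Fin m → k)) =
          g.toLinearMap ∘ₗ (φ i : (Fin m → k) →ₗ[k] (Fin m → k)) ∘ₗ g.symm.toLinearMap) ∧
        (∀ j, p.2 j = f j ∘ₗ g.symm.toLinearMap)) ∧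
      (∀ t s : Fin m,
        (p.2 ((e t) : Fin r × List (Fin q)).1)
            (phiWord p.1 ((e t) : Fin r × List (Fin q)).2 (Pi.single s 1)) =
          if t = s then 1 else 0) := by
  classical
  -- the dual family indexed by Fin m
  set B : Fin m → ((Fin m → k) →ₗ[k] k) :=
    fun t => f ((e t : Fin r × List (Fin q)).1) ∘ₗ
      (phiWord φ (e t : Fin r × List (Fin q)).2 : (Fin m → k) →ₗ[k] (Fin m → k)) with hB
  -- evaluation map
  set G : (Fin m → k) →ₗ[k] (Fin m → k) := LinearMap.pi B with hG
  have hGapp : ∀ x t, G x t = B t x := fun x t => rfl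
  -- injectivity of G
  have hinj : Function.Injective G := by
    rw [← LinearMap.ker_eq_bot, Submodule.eq_bot_iff]
    intro x hx
    have hBx : ∀ t, B t x = 0 := by
      intro t
      have : G x = 0 := hx
      have := congrFun this t
      simpa [hGapp] using this
    -- every functional in the span vanishes at x; the span is everything
    have hall : ∀ ℓ : (Fin m → k) →ₗ[k] k, ℓ x = 0 := by
      intro ℓ
      have hℓ : ℓ ∈ Submodule.span k
          (Set.range fun p : S =>
            (f p.1.1) ∘ₗ (phiWord φ p.1.2 : (Fin m → k) →ₗ[k] (Fin m → k))) := by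
        rw [hsp]; trivial
      induction hℓ using Submodule.span_induction with
      | mem ℓ hℓ =>
          obtain ⟨p, rfl⟩ := hℓ
          have := hBx (e.symm p)
          simpa [hB, e.apply_symm_apply] using this
      | zero => simp
      | add a b _ _ ha hb => simp [ha, hb]
      | smul c a _ ha => simp [ha]
    funext t
    have := hall (LinearMap.proj t)
    simpa using this
  have hbij : Function.Bijective G :=
    ⟨hinj, (LinearMap.injective_iff_surjective).mp hinj⟩
  set g : (Fin m → k) ≃ₗ[k] (Fin m → k) := LinearEquiv.ofBijective G hbij with hg
  have hgapp : ∀ x, g x = G x := fun x => rfl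
  -- canonical normal form
  refine ⟨⟨fun i => (g.toLinearMap ∘ₗ (φ i : (Fin m → k) →ₗ[k] (Fin m → k)) ∘ₗ
      g.symm.toLinearMap : Module.End k (Fin m → k)),
      fun j => f j ∘ₗ g.symm.toLinearMap⟩, ⟨⟨g, fun i => rfl, fun j => rfl⟩, ?_⟩, ?_⟩
  · intro t s
    have hconj := phiWord_conj φ g ((e t : Fin r × List (Fin q)).2)
    have : phiWord (fun i => (g.toLinearMap ∘ₗ (φ i : (Fin m → k) →ₗ[k] (Fin m → k)) ∘ₗ
        g.symm.toLinearMap : Module.End k (Fin m → k))) (e t : Fin r × List (Fin q)).2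
        (Pi.single s 1)
        = g (phiWord φ (e t : Fin r × List (Fin q)).2 (g.symm (Pi.single s 1))) := by
      have := congrFun (congrArg (fun h : (Fin m → k) →ₗ[k] (Fin m → k) => ⇑h) hconj)
        (Pi.single s 1)
      simpa using this
    simp only [this]
    rw [LinearMap.comp_apply]
    simp only [LinearEquiv.coe_coe, LinearEquiv.symm_apply_apply]
    have : f ((e t : Fin r × List (Fin q)).1)
        (phiWord φ (e t : Fin r × List (Fin q)).2 (g.symm (Pi.single s 1)))
        = B t (g.symm (Pi.single s 1)) := rfl
    rw [this, ← hGapp, ← hgapp, g.apply_symm_apply]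
    simp [Pi.single_apply]
  · -- uniqueness
    rintro ⟨φ', f'⟩ ⟨⟨g', hg1, hg2⟩, hnorm⟩
    -- show g'.symm = g.symm
    have key : ∀ s, g (g'.symm (Pi.single s 1)) = Pi.single s 1 := by
      intro s
      funext t
      have hn := hnorm t s
      have hconj := phiWord_conj φ g' ((e t : Fin r × List (Fin q)).2)
      have hφ' : (phiWord φ' (e t : Fin r × List (Fin q)).2 :
          (Fin m → k) →ₗ[k] (Fin m → k))
          = g'.toLinearMap ∘ₗ (phiWord φ (e t : Fin r × List (Fin q)).2 :
            (Fin m → k) →ₗ[k] (Fin m → k)) ∘ₗ g'.symm.toLinearMap := by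
        have : φ' = fun i => (g'.toLinearMap ∘ₗ (φ i : (Fin m → k) →ₗ[k] (Fin m → k)) ∘ₗ
            g'.symm.toLinearMap : Module.End k (Fin m → k)) := by
          funext i; exact hg1 i
        rw [this]; exact hconj
      have hval : f' ((e t : Fin r × List (Fin q)).1)
          (phiWord φ' (e t : Fin r × List (Fin q)).2 (Pi.single s 1))
          = B t (g'.symm (Pi.single s 1)) := by
        rw [show f' ((e t : Fin r × List (Fin q)).1)
            = f ((e t : Fin r × List (Fin q)).1) ∘ₗ g'.symm.toLinearMap from hg2 _]
        rw [hφ']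
        simp [hB]
      rw [hval] at hn
      rw [hgapp, hGapp, hn, Pi.single_apply]
    have hsymm : (g'.symm : (Fin m → k) →ₗ[k] (Fin m → k))
        = (g.symm : (Fin m → k) →ₗ[k] (Fin m → k)) := by
      apply Module.Basis.ext (Pi.basisFun k (Fin m))
      intro s
      have : g'.symm (Pi.single s 1) = g.symm (Pi.single s 1) := by
        apply g.injective
        rw [key s, g.apply_symm_apply]
      simpa using this
    have hgeq : (g' : (Fin m → k) →ₗ[k] (Fin m → k))
        = (g : (Fin m → k) →ₗ[k] (Fin m → k)) := by
      apply Module.Basis.ext (Pi.basisFun k (Fin m))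
      intro s
      have h1 : g'.symm (g (Pi.single s 1)) = Pi.single s 1 := by
        have := congrFun (congrArg (fun h : (Fin m → k) →ₗ[k] (Fin m → k) => ⇑h) hsymm)
          (g (Pi.single s 1))
        simpa using this
      have : g' (g'.symm (g (Pi.single s 1))) = g' (Pi.single s 1) := by rw [h1]
      rw [g'.apply_symm_apply] at this
      simpa using this.symm
    refine Prod.ext ?_ ?_
    · funext i
      have := hg1 i
      apply LinearMap.ext
      intro x
      have h2 := congrFun (congrArg (fun h : (Fin m → k) →ₗ[k] (Fin m → k) => ⇑h) this) x
      simp only [LinearMap.coe_comp, Function.comp_apply, LinearEquiv.coe_coe] at h2 ⊢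
      rw [h2]
      have hs := congrFun (congrArg (fun h : (Fin m → k) →ₗ[k] (Fin m → k) => ⇑h) hsymm) x
      simp only [LinearEquiv.coe_coe] at hs
      rw [hs]
      have hgg := congrFun (congrArg (fun h : (Fin m → k) →ₗ[k] (Fin m → k) => ⇑h) hgeq)
        ((φ i) (g.symm x))
      simpa using hgg
    · funext j
      rw [hg2 j]
      apply LinearMap.ext
      intro x
      simp only [LinearMap.coe_comp, Function.comp_apply, LinearEquiv.coe_coe]
      have hs := congrFun (congrArg (fun h : (Fin m → k) →ₗ[k] (Fin m → k) => ⇑h) hsymm) x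
      simp only [LinearEquiv.coe_coe] at hs
      rw [hs]
end

section
/- Let a ∈ End(k²), f₁, f₂ ∈ (k²)*, and define Plücker-type quantities p_{u,v} = det of the 2×2 matrix with rows u, v for functionals u, v on k². Then for any such triple the identity p_{f₁,f₁a²}·p_{f₁,f₂} = p_{f₁,f₁a}·(p_{f₁,f₂a} − p_{f₂,f₁a}) holds, where f₁a denotes f₁∘a, etc. -/
/-- Plücker-type coordinate: the determinant of the 2×2 matrix whose rows are the
coordinate vectors of the functionals `u` and `v` on `k²`. -/
def pluck {k : Type*} [Field k] (u v : (Fin 2 → k) →ₗ[k] k) : k :=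
  Matrix.det (Matrix.of fun i j : Fin 2 => ![u, v] i (Pi.single j 1))

theorem plucker_relation_q1
    {k : Type*} [Field k]
    (a : Module.End k (Fin 2 → k)) (f₁ f₂ : (Fin 2 → k) →ₗ[k] k) :
    pluck f₁ (f₁ ∘ₗ ((a * a : Module.End k (Fin 2 → k)) : (Fin 2 → k) →ₗ[k] (Fin 2 → k))) *
        pluck f₁ f₂ =
      pluck f₁ (f₁ ∘ₗ (a : (Fin 2 → k) →ₗ[k] (Fin 2 → k))) *
        (pluck f₁ (f₂ ∘ₗ (a : (Fin 2 → k) →ₗ[k] (Fin 2 → k))) -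
          pluck f₂ (f₁ ∘ₗ (a : (Fin 2 → k) →ₗ[k] (Fin 2 → k)))) := by
  have key : ∀ i : Fin 2, (fun j => if i = j then (1 : k) else 0) = Pi.single i 1 := by
    intro i; funext j; simp [Pi.single_apply, eq_comm]
  have ha : ∀ x : Fin 2 → k, a x = ∑ i : Fin 2, x i • a (Pi.single i 1) := by
    intro x
    rw [LinearMap.pi_apply_eq_sum_univ (a : (Fin 2 → k) →ₗ[k] (Fin 2 → k)) x]
    exact Finset.sum_congr rfl fun i _ => by rw [key]
  have h1 : ∀ x : Fin 2 → k, f₁ x = ∑ i : Fin 2, x i • f₁ (Pi.single i 1) := by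
    intro x
    rw [LinearMap.pi_apply_eq_sum_univ f₁ x]
    exact Finset.sum_congr rfl fun i _ => by rw [key]
  have h2 : ∀ x : Fin 2 → k, f₂ x = ∑ i : Fin 2, x i • f₂ (Pi.single i 1) := by
    intro x
    rw [LinearMap.pi_apply_eq_sum_univ f₂ x]
    exact Finset.sum_congr rfl fun i _ => by rw [key]
  simp only [pluck, Matrix.det_fin_two, Matrix.of_apply, Matrix.cons_val', Matrix.cons_val_zero,
    Matrix.cons_val_one, Matrix.head_cons, Matrix.empty_val', Matrix.cons_val_fin_one,
    LinearMap.comp_apply, Module.End.mul_apply]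
  rw [ha (a (Pi.single 0 1)), ha (a (Pi.single 1 1))]
  simp only [map_add, map_smul, Fin.sum_univ_two, smul_eq_mul]
  rw [h1 (a (Pi.single 0 1)), h1 (a (Pi.single 1 1)), h2 (a (Pi.single 0 1)),
    h2 (a (Pi.single 1 1))]
  simp only [Fin.sum_univ_two, smul_eq_mul, Pi.single_apply, if_true, if_neg, Fin.zero_eq_one_iff,
    Fin.one_eq_zero_iff, Nat.succ_ne_self, ite_true, ite_false, reduceIte]
  ring
end

section
/- Let a, b ∈ End(k²) and f ∈ (k²)*, and set p_{u,v} = det with rows u, v for functionals on k². Then p_{f,fa²}·p_{f,fb} = p_{f,fa}·(p_{fa,fb} + p_{f,fba}), where fa = f∘a, fa² = f∘a², fb = f∘b, fba = f∘b∘a. -/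
lemma expand2 {k : Type*} [Field k] {M : Type*} [AddCommMonoid M] [Module k M]
    (g : (Fin 2 → k) →ₗ[k] M) (x : Fin 2 → k) :
    g x = x 0 • g (Pi.single 0 1) + x 1 • g (Pi.single 1 1) := by
  have h : x = x 0 • (Pi.single 0 1 : Fin 2 → k) + x 1 • (Pi.single 1 1 : Fin 2 → k) := by
    ext i; fin_cases i <;> simp [Pi.single_apply]
  conv_lhs => rw [h]
  simp

theorem plucker_relation_q2
    {k : Type*} [Field k]
    (a b : Module.End k (Fin 2 → k)) (f : (Fin 2 → k) →ₗ[k] k) :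
    pluck f (f ∘ₗ ((a * a : Module.End k (Fin 2 → k)) : (Fin 2 → k) →ₗ[k] (Fin 2 → k))) *
        pluck f (f ∘ₗ (b : (Fin 2 → k) →ₗ[k] (Fin 2 → k))) =
      pluck f (f ∘ₗ (a : (Fin 2 → k) →ₗ[k] (Fin 2 → k))) *
        (pluck (f ∘ₗ (a : (Fin 2 → k) →ₗ[k] (Fin 2 → k)))
            (f ∘ₗ (b : (Fin 2 → k) →ₗ[k] (Fin 2 → k))) +
          pluck f (f ∘ₗ ((b * a : Module.End k (Fin 2 → k)) : (Fin 2 → k) →ₗ[k] (Fin 2 → k)))) := by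
  simp only [pluck, Matrix.det_fin_two, Matrix.of_apply, Matrix.cons_val', Matrix.cons_val_zero,
    Matrix.cons_val_one, Matrix.head_cons, Matrix.empty_val', Matrix.cons_val_fin_one,
    LinearMap.comp_apply, Module.End.mul_apply]
  rw [expand2 a (a (Pi.single 0 1)), expand2 a (a (Pi.single 1 1)),
      expand2 b (a (Pi.single 0 1)), expand2 b (a (Pi.single 1 1))]
  simp only [map_add, map_smul, smul_eq_mul]
  rw [expand2 f (a (Pi.single 0 1)), expand2 f (a (Pi.single 1 1)),
      expand2 f (b (Pi.single 0 1)), expand2 f (b (Pi.single 1 1))]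
  simp only [smul_eq_mul]
  ring
end
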